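/- Let h be a prime divisor of q, let φ: ℤ_q^m → ℤ_h be a normalized array (φ(0) = 0) with expansion φ' of type z ≠ 0, and let E, K, L be the associated groups. The following are equivalent: (i) the cocycle μ_z·∂φ is symmetric and orthogonal, i.e., M_{μ_z·∂φ} is a symmetric Butson Hadamard matrix in BH(q^m, h); (ii) φ is a GPhA(q^m) of type z; (iii) {g + K ∈ E/K : φ'(g) = 0} is a non-splitting (q^m, h, q^m, q^m/h)-relative difference set in E/K with forbidden subgroup L/K. -/

import Mathlib

/-! Write `U g = Σ_i ⌊g_i / s_i⌋ (mod h)`, so that `φ' = φ ∘ res + U` and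
`U (g + w) = U g + U w + μ_z(res g, res w)`. Hence `AC_{φ'}(w)` is a unit multiple of
`Σ_x ζ_h^{φ x - φ (x + y) - μ_z(x, y)}` with `y = res w`, which up to a unit and complex
conjugation is the row sum at `y` of `M_{μ_z ∂φ}`. Since `μ_z ∂φ` is a symmetric normalized
cocycle, its matrix is Hadamard exactly when all nonzero row sums vanish. For prime `h` a sum
`Σ_u c_u ζ_h^u` with rational `c_u` vanishes iff all `c_u` are equal, i.e. iff the exponent takes
every value `q^m / h` times.

The map `g + K ↦ (res g, U g)` identifies `E/K` with `G × ℤ_h` carrying the extension law with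
cocycle `μ_z`; in these coordinates `L/K = {0} × ℤ_h` and `R` is the graph of `-φ`, and the
number of ways to write `w + K` as a difference of elements of `R` is the number of `x` with
`φ x - φ (x + y) - μ_z(x, y) = U w`. Finally `L/K` has no complement: it has exponent `h`, while
`h ∣ q` makes its generator an `h`-th multiple in `E/K`. -/

open scoped BigOperators Pointwise

noncomputable section

/-- `zeta k` is the complex `k`-th root of unity `exp(2π√-1/k)`. -/
def zeta (k : ℕ) : ℂ := Complex.exp (2 * Real.pi * Complex.I / k)

/-- Periodic autocorrelation of a map `f : A → ℤ_h` at shift `w`. -/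
def AC {A : Type*} [AddCommGroup A] [Fintype A] (h : ℕ) (f : A → ZMod h) (w : A) : ℂ :=
  ∑ g : A, zeta h ^ (f g - f (g + w)).val

/-- The expansion `φ' : E → ℤ_h` of type `z` of an `h`-ary array `φ`:
`φ'(g) = φ(g mod s) + Σ_i ⌊g_i / s_i⌋ (mod h)`. -/
def expand (m h : ℕ) (s z : Fin m → ℕ) (φ : (∀ i, ZMod (s i)) → ZMod h)
    (g : ∀ i, ZMod ((z i * (h - 1) + 1) * s i)) : ZMod h :=
  φ (fun i => ((g i).val : ZMod (s i))) + ((∑ i, (g i).val / s i : ℕ) : ZMod h)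

/-- The set `L ⊆ E`. -/
def LSet (m h : ℕ) (s z : Fin m → ℕ) :
    Set (∀ i, ZMod ((z i * (h - 1) + 1) * s i)) :=
  {g | ∀ i, s i ∣ (g i).val ∧ (z i = 0 → (g i).val = 0)}

private theorem cast_val_mod {n t : ℕ} (hd : t ∣ n) (X : ℕ) :
    ((X % n : ℕ) : ZMod t) = (X : ZMod t) := by
  conv_rhs => rw [← Nat.div_add_mod X n]
  push_cast
  rw [(ZMod.natCast_eq_zero_iff n t).2 hd]
  ring

/-- `L` as a subgroup of `E`. -/
def Lsub (m h : ℕ) (s z : Fin m → ℕ)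
    [∀ i, NeZero ((z i * (h - 1) + 1) * s i)] :
    AddSubgroup (∀ i, ZMod ((z i * (h - 1) + 1) * s i)) where
  carrier := LSet m h s z
  zero_mem' := by
    intro i
    simp [ZMod.val_zero]
  add_mem' := by
    rintro a b ha hb i
    obtain ⟨ha1, ha2⟩ := ha i
    obtain ⟨hb1, hb2⟩ := hb i
    have hval : ((a + b) i).val = ((a i).val + (b i).val) % ((z i * (h - 1) + 1) * s i) :=
      ZMod.val_add _ _
    constructor
    · rw [hval]
      exact (Nat.dvd_mod_iff (dvd_mul_left _ _)).2 (Nat.dvd_add ha1 hb1)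
    · intro hzi
      rw [hval, ha2 hzi, hb2 hzi]
      simp
  neg_mem' := by
    rintro a ha i
    obtain ⟨ha1, ha2⟩ := ha i
    have hval : ((-a) i).val
        = if a i = 0 then 0 else (z i * (h - 1) + 1) * s i - (a i).val :=
      ZMod.neg_val _
    constructor
    · rw [hval]
      split
      · exact dvd_zero _
      · exact Nat.dvd_sub (dvd_mul_left _ _) ha1
    · intro hzi
      rw [hval]
      have : a i = 0 := (ZMod.val_eq_zero _).1 (ha2 hzi)
      simp [this]

/-- `K = {g ∈ L : Σ_i g_i/s_i ≡ 0 (mod h)}` as a subgroup of `E`. -/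
def Ksub (m h : ℕ) (s z : Fin m → ℕ)
    [∀ i, NeZero ((z i * (h - 1) + 1) * s i)]
    (hh : 2 ≤ h) (hs : ∀ i, 1 < s i) (hz : ∀ i, z i ≤ 1) :
    AddSubgroup (∀ i, ZMod ((z i * (h - 1) + 1) * s i)) where
  carrier := {g | g ∈ LSet m h s z ∧ (h : ℕ) ∣ ∑ i, (g i).val / s i}
  zero_mem' := by
    refine ⟨(Lsub m h s z).zero_mem', ?_⟩
    simp [ZMod.val_zero]
  add_mem' := by
    rintro a b ⟨haL, haS⟩ ⟨hbL, hbS⟩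
    refine ⟨(Lsub m h s z).add_mem' haL hbL, ?_⟩
    rw [← ZMod.natCast_eq_zero_iff] at haS hbS ⊢
    rw [Nat.cast_sum] at haS hbS ⊢
    have key : ∀ i, ((((a + b) i).val / s i : ℕ) : ZMod h)
        = (((a i).val / s i : ℕ) : ZMod h) + (((b i).val / s i : ℕ) : ZMod h) := by
      intro i
      have hzi : z i = 0 ∨ z i = 1 := by have := hz i; omega
      have hval : ((a + b) i).val = ((a i).val + (b i).val) % ((z i * (h - 1) + 1) * s i) :=
        ZMod.val_add _ _
      rcases hzi with h0 | h1
      · have ha0 := (haL i).2 h0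
        have hb0 := (hbL i).2 h0
        rw [hval, ha0, hb0]
        simp
      · have hc : z i * (h - 1) + 1 = h := by rw [h1]; omega
        obtain ⟨α, hα⟩ := (haL i).1
        obtain ⟨β, hβ⟩ := (hbL i).1
        have hspos : 0 < s i := by have := hs i; omega
        rw [hval, Nat.mod_mul_left_div_self, hα, hβ, ← Nat.mul_add,
          Nat.mul_div_cancel_left _ hspos, Nat.mul_div_cancel_left _ hspos,
          Nat.mul_div_cancel_left _ hspos, hc, ZMod.natCast_mod, Nat.cast_add]
    rw [Finset.sum_congr rfl fun i _ => key i, Finset.sum_add_distrib, haS, hbS, add_zero]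
  neg_mem' := by
    rintro a ⟨haL, haS⟩
    refine ⟨(Lsub m h s z).neg_mem' haL, ?_⟩
    rw [← ZMod.natCast_eq_zero_iff] at haS ⊢
    rw [Nat.cast_sum] at haS ⊢
    have key : ∀ i, ((((-a) i).val / s i : ℕ) : ZMod h)
        = -(((a i).val / s i : ℕ) : ZMod h) := by
      intro i
      have hzi : z i = 0 ∨ z i = 1 := by have := hz i; omega
      have hval : ((-a) i).val
          = if a i = 0 then 0 else (z i * (h - 1) + 1) * s i - (a i).val :=
        ZMod.neg_val _
      by_cases h0 : a i = 0
      · rw [hval, if_pos h0, h0]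
        simp [ZMod.val_zero]
      · rcases hzi with hz0 | hz1
        · exact absurd ((ZMod.val_eq_zero _).1 ((haL i).2 hz0)) h0
        · have hc : z i * (h - 1) + 1 = h := by rw [hz1]; omega
          obtain ⟨α, hα⟩ := (haL i).1
          have hspos : 0 < s i := by have := hs i; omega
          have hlt : (a i).val < (z i * (h - 1) + 1) * s i := ZMod.val_lt _
          have hαle : α ≤ z i * (h - 1) + 1 := by
            rw [hα, mul_comm (z i * (h - 1) + 1) (s i)] at hlt
            have := Nat.lt_of_mul_lt_mul_left hlt
            omega
          have hsub : (z i * (h - 1) + 1) * s i - (a i).val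
              = s i * ((z i * (h - 1) + 1) - α) := by
            rw [hα, mul_comm (z i * (h - 1) + 1) (s i)]
            exact (Nat.mul_sub _ _ _).symm
          rw [hval, if_neg h0, hsub, Nat.mul_div_cancel_left _ hspos, hα,
            Nat.mul_div_cancel_left _ hspos, Nat.cast_sub hαle, hc]
          simp
    rw [Finset.sum_congr rfl fun i _ => key i, Finset.sum_neg_distrib, haS, neg_zero]

/-- The reduction-mod-`s` homomorphism `E →+ G`. -/
def resHom (m h : ℕ) (s z : Fin m → ℕ)
    [∀ i, NeZero ((z i * (h - 1) + 1) * s i)] :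
    (∀ i, ZMod ((z i * (h - 1) + 1) * s i)) →+ (∀ i, ZMod (s i)) where
  toFun g i := ((g i).val : ZMod (s i))
  map_zero' := by
    funext i
    simp [ZMod.val_zero]
  map_add' a b := by
    funext i
    show (((a i + b i)).val : ZMod (s i)) = ((a i).val : ZMod (s i)) + ((b i).val : ZMod (s i))
    rw [ZMod.val_add, cast_val_mod (dvd_mul_left _ _), Nat.cast_add]

/-- The homomorphism `β : E/K → G` induced by reduction mod `s`. -/
def betaHom (m h : ℕ) (s z : Fin m → ℕ)
    [∀ i, NeZero ((z i * (h - 1) + 1) * s i)]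
    (hh : 2 ≤ h) (hs : ∀ i, 1 < s i) (hz : ∀ i, z i ≤ 1) :
    (∀ i, ZMod ((z i * (h - 1) + 1) * s i)) ⧸ Ksub m h s z hh hs hz →+ (∀ i, ZMod (s i)) :=
  QuotientAddGroup.lift (Ksub m h s z hh hs hz) (resHom m h s z) (by
    intro g hg
    funext i
    exact (ZMod.natCast_eq_zero_iff _ _).2 ((hg.1 i).1))

/-- The transversal map `τ : G → E/K`, `τ(x) = x + K`
(embedding `x` with representatives `0 ≤ x_i < s_i`). -/
def tau (m h : ℕ) (s z : Fin m → ℕ)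
    [∀ i, NeZero ((z i * (h - 1) + 1) * s i)]
    (hh : 2 ≤ h) (hs : ∀ i, 1 < s i) (hz : ∀ i, z i ≤ 1)
    (x : ∀ i, ZMod (s i)) :
    (∀ i, ZMod ((z i * (h - 1) + 1) * s i)) ⧸ Ksub m h s z hh hs hz :=
  QuotientAddGroup.mk (fun i => (((x i).val : ℕ) : ZMod ((z i * (h - 1) + 1) * s i)))

/-- The injection `ι : ⟨ζ_h⟩ ≅ ℤ_h → E/K`, sending `ζ_h^j` to
`j • ((0,…,0,s_{i₀},0,…,0) + K)` for the fixed index `i₀` with `z i₀ = 1`. -/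
def iota (m h : ℕ) (s z : Fin m → ℕ)
    [∀ i, NeZero ((z i * (h - 1) + 1) * s i)]
    (hh : 2 ≤ h) (hs : ∀ i, 1 < s i) (hz : ∀ i, z i ≤ 1)
    (i₀ : Fin m) (j : ZMod h) :
    (∀ i, ZMod ((z i * (h - 1) + 1) * s i)) ⧸ Ksub m h s z hh hs hz :=
  j.val • (QuotientAddGroup.mk
    (Pi.single i₀ ((s i₀ : ℕ) : ZMod ((z i₀ * (h - 1) + 1) * s i₀))))

/-- `R` is a `(v,n,k,λ)`-relative difference set in the additive group `E`
relative to the (forbidden) subgroup `N`. -/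
def IsAddRDS {E : Type*} [AddGroup E] (N : AddSubgroup E) (R : Set E)
    (v n k l : ℕ) : Prop :=
  N.index = v ∧ Nat.card N = n ∧ Nat.card R = k ∧
    (∀ r ∈ R, ∀ r' ∈ R, r - r' ∈ N → r = r') ∧
    ∀ x : E, x ∉ N → Nat.card {p : R × R // (p.1 : E) - (p.2 : E) = x} = l

/-- A Butson Hadamard matrix in `BH(n,k)`. -/
def IsBH {ι : Type*} [Fintype ι] [DecidableEq ι] (n k : ℕ) (M : Matrix ι ι ℂ) : Prop :=
  Fintype.card ι = n ∧ (∀ a b, ∃ j : ℕ, M a b = zeta k ^ j) ∧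
    M * M.conjTranspose = (n : ℂ) • (1 : Matrix ι ι ℂ)

end

/-- The cocycle `μ_z` in exponent form:
`μ_z(x,y) = ζ_h^{Σ_{i : z i = 1} ⌊(x_i+y_i)/s_i⌋}`. -/
def muexp (m h : ℕ) (s z : Fin m → ℕ) (x y : ∀ i, ZMod (s i)) : ZMod h :=
  ((∑ i, if z i = 1 then ((x i).val + (y i).val) / s i else 0 : ℕ) : ZMod h)

/-- The cocycle `ψ = μ_z·∂φ` in exponent form, i.e.
`ψ(x,y) = μ_z(x,y)·ζ_h^{φ(x+y)-φ(x)-φ(y)}`. -/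
def psiexp (m h : ℕ) (s z : Fin m → ℕ) (φ : (∀ i, ZMod (s i)) → ZMod h)
    (x y : ∀ i, ZMod (s i)) : ZMod h :=
  muexp m h s z x y + (φ (x + y) - φ x - φ y)

open Finset

lemma Nat.div_add_mod_add_div (a b q : ℕ) (hq : 0 < q) :
    a / q + (a % q + b) / q = (a + b) / q := by
  conv_rhs => rw [← Nat.div_add_mod a q, add_assoc, Nat.mul_add_div hq]

lemma Nat.add_div_eq_add_add_mod_add_mod_div (a b q : ℕ) (hq : 0 < q) :
    (a + b) / q = a / q + b / q + (a % q + b % q) / q := by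
  rw [← Nat.div_add_mod_add_div a b q hq, add_comm (a % q) b,
    ← Nat.div_add_mod_add_div b (a % q) q hq, add_comm (b % q)]
  ring

lemma Nat.add_mod_mul_div_modEq (a b k n : ℕ) (hn : 0 < n) :
    (a + b) % (k * n) / n ≡ a / n + b / n + (a % n + b % n) / n [MOD k] := by
  rw [Nat.mod_mul_left_div_self, ← Nat.add_div_eq_add_add_mod_add_mod_div a b n hn]
  exact Nat.mod_modEq _ _

lemma zeta_pow_val {h : ℕ} [NeZero h] (u : ZMod h) : zeta h ^ u.val = ZMod.stdAddChar u := by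
  rw [ZMod.stdAddChar_apply, ZMod.toCircle_apply, zeta, ← Complex.exp_nat_mul]
  congr 1
  ring

lemma stdAddChar_ne_zero {h : ℕ} [NeZero h] (u : ZMod h) : ZMod.stdAddChar u ≠ 0 := by
  rw [ZMod.stdAddChar_apply]
  exact Circle.coe_ne_zero _

lemma sum_mul_stdAddChar_eq_zero_iff {p : ℕ} [NeZero p] (hp : p.Prime) (c : ZMod p → ℚ) :
    ∑ u, (c u : ℂ) * ZMod.stdAddChar u = 0 ↔ ∀ u v, c u = c v := by
  simp_rw [← zeta_pow_val]
  obtain ⟨n, rfl⟩ : ∃ n, p = n + 1 := ⟨p - 1, by have := hp.pos; omega⟩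
  exact IsPrimitiveRoot.sum_eq_zero_iff_forall_eq hp
    (Complex.isPrimitiveRoot_exp _ (NeZero.ne _)) c

lemma sum_comp_eq_card_ker_nsmul {A B M : Type*} [AddGroup A] [Fintype A] [AddGroup B]
    [Fintype B] [DecidableEq B] [AddCommMonoid M] (f : A →+ B) (hf : Function.Surjective f)
    (F : B → M) :
    ∑ a, F (f a) = #{a | f a = 0} • ∑ b, F b := by
  rw [← Finset.sum_fiberwise univ f (fun a => F (f a)), Finset.smul_sum]
  refine Finset.sum_congr rfl fun b _ => ?_
  rw [Finset.sum_congr rfl fun a ha => by rw [(Finset.mem_filter.1 ha).2], Finset.sum_const,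
    AddMonoidHom.card_fiber_eq_of_mem_range f (hf b) ⟨0, map_zero f⟩]

lemma forall_eq_iff_forall_eq_sum_div {ι : Type*} [Fintype ι] [Nonempty ι] (c : ι → ℕ) :
    (∀ u v, c u = c v) ↔ ∀ u, c u = (∑ v, c v) / Fintype.card ι := by
  constructor
  · intro hc u
    rw [Finset.sum_congr rfl fun v _ => hc v u, Finset.sum_const, Finset.card_univ, smul_eq_mul,
      Nat.mul_div_cancel_left _ Fintype.card_pos]
  · intro hc u v
    rw [hc u, hc v]

lemma card_pi_zmod {m q : ℕ} {s : Fin m → ℕ} [∀ i, NeZero (s i)] (hsq : ∀ i, s i = q) :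
    Fintype.card (∀ i, ZMod (s i)) = q ^ m := by
  simp [hsq]

lemma card_pairs_sub_eq {A : Type*} [AddCommGroup A] (R : Set A) (x : A) :
    Nat.card {p : R × R // (p.1 : A) - p.2 = x} = Nat.card {r : R // (r : A) + x ∈ R} :=
  Nat.card_congr
    { toFun p := ⟨p.1.2, by
        obtain ⟨⟨⟨a, ha⟩, ⟨b, -⟩⟩, rfl⟩ := p
        simpa using ha⟩
      invFun r := ⟨(⟨r.1 + x, r.2⟩, r.1), add_sub_cancel_left _ _⟩
      left_inv := by
        rintro ⟨⟨⟨a, ha⟩, ⟨b, hb⟩⟩, rfl⟩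
        simp
      right_inv _ := rfl }

/-- With `d = a - b`, the cocycle identity makes the `(a, b)` entry of `M Mᴴ` a unit multiple of
the row sum of `d`. -/
lemma cocyclic_mul_conjTranspose_eq_iff {G : Type*} [AddCommGroup G] [Fintype G] [DecidableEq G]
    {h : ℕ} [NeZero h] (ψ : G → G → ZMod h)
    (hψ : ∀ a b c, ψ a b + ψ (a + b) c = ψ b c + ψ a (b + c)) (hψ0 : ∀ c, ψ 0 c = 0) :
    (Matrix.of fun a b => ZMod.stdAddChar (ψ a b))
        * (Matrix.of fun a b => ZMod.stdAddChar (ψ a b)).conjTranspose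
        = (Fintype.card G : ℂ) • (1 : Matrix G G ℂ)
      ↔ ∀ d ≠ 0, ∑ c, ZMod.stdAddChar (ψ d c) = 0 := by
  have hentry (a b : G) : ((Matrix.of fun a b => ZMod.stdAddChar (ψ a b))
      * (Matrix.of fun a b => ZMod.stdAddChar (ψ a b)).conjTranspose) a b
        = ZMod.stdAddChar (-ψ (a - b) b) * ∑ c, ZMod.stdAddChar (ψ (a - b) c) := by
    rw [Matrix.mul_apply, Finset.mul_sum]
    refine Fintype.sum_equiv (Equiv.addLeft b) _ _ fun c => ?_
    have hc := hψ (a - b) b c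
    rw [sub_add_cancel] at hc
    simp only [Matrix.of_apply, Matrix.conjTranspose_apply, Equiv.coe_addLeft, RCLike.star_def,
      ← AddChar.map_neg_eq_conj, ← AddChar.map_add_eq_mul]
    congr 1
    linear_combination hc
  constructor
  · intro hM d hd
    have hd0 := congrFun (congrFun hM d) 0
    rw [hentry, sub_zero, Matrix.smul_apply, Matrix.one_apply_ne hd, smul_zero] at hd0
    exact (mul_eq_zero.1 hd0).resolve_left (stdAddChar_ne_zero _)
  · intro hrow
    ext a b
    rw [hentry, Matrix.smul_apply]
    by_cases hab : a = b
    · subst hab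
      simp [hψ0]
    · rw [hrow _ (sub_ne_zero.2 hab), mul_zero, Matrix.one_apply_ne hab, smul_zero]

/-- Chosen so that `φ' = φ ∘ res + highDigitSum`. -/
def highDigitSum (m h : ℕ) (s z : Fin m → ℕ) (g : ∀ i, ZMod ((z i * (h - 1) + 1) * s i)) :
    ZMod h :=
  ((∑ i, (g i).val / s i : ℕ) : ZMod h)

/-- A preimage of `(x, u)` under `g ↦ (res g, highDigitSum g)`. -/
def ofCoords (m h : ℕ) (s z : Fin m → ℕ) (i₀ : Fin m) (x : ∀ i, ZMod (s i)) (u : ZMod h) :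
    ∀ i, ZMod ((z i * (h - 1) + 1) * s i) :=
  fun i => (((x i).val + if i = i₀ then u.val * s i else 0 : ℕ) : ZMod _)

section Expansion

variable {m h : ℕ} {s z : Fin m → ℕ}

lemma modulus_of_eq_zero {i : Fin m} (hzi : z i = 0) : (z i * (h - 1) + 1) * s i = s i := by
  simp [hzi]

lemma modulus_of_eq_one [NeZero h] {i : Fin m} (hzi : z i = 1) :
    (z i * (h - 1) + 1) * s i = h * s i := by
  rw [hzi, one_mul, Nat.sub_add_cancel (Nat.one_le_iff_ne_zero.2 (NeZero.ne h))]

lemma muexp_comm (x y : ∀ i, ZMod (s i)) : muexp m h s z x y = muexp m h s z y x := by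
  simp only [muexp, add_comm (x _).val]

lemma muexp_zero_right [∀ i, NeZero (s i)] (x : ∀ i, ZMod (s i)) : muexp m h s z x 0 = 0 := by
  have hx (i : Fin m) : (x i).val / s i = 0 := Nat.div_eq_of_lt (ZMod.val_lt _)
  simp [muexp, hx]

/-- The carry cocycle identity: both sides count the carries of `a + b + c` in each coordinate. -/
lemma muexp_add_muexp [∀ i, NeZero (s i)] (a b c : ∀ i, ZMod (s i)) :
    muexp m h s z a b + muexp m h s z (a + b) c = muexp m h s z b c + muexp m h s z a (b + c) := by
  simp only [muexp, ← Nat.cast_add, ← Finset.sum_add_distrib]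
  congr 2 with i
  split_ifs
  · have hs : 0 < s i := Nat.pos_of_ne_zero (NeZero.ne _)
    rw [Pi.add_apply, Pi.add_apply, ZMod.val_add, ZMod.val_add, Nat.div_add_mod_add_div _ _ _ hs,
      add_comm (a i).val (((b i).val + (c i).val) % s i), Nat.div_add_mod_add_div _ _ _ hs]
    ring_nf
  · rfl

lemma psiexp_comm (φ : (∀ i, ZMod (s i)) → ZMod h) (x y : ∀ i, ZMod (s i)) :
    psiexp m h s z φ x y = psiexp m h s z φ y x := by
  rw [psiexp, psiexp, muexp_comm, add_comm x y]
  ring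

lemma psiexp_add_psiexp [∀ i, NeZero (s i)] (φ : (∀ i, ZMod (s i)) → ZMod h)
    (a b c : ∀ i, ZMod (s i)) :
    psiexp m h s z φ a b + psiexp m h s z φ (a + b) c
      = psiexp m h s z φ b c + psiexp m h s z φ a (b + c) := by
  have := muexp_add_muexp (m := m) (h := h) (z := z) a b c
  simp only [psiexp, add_assoc] at this ⊢
  linear_combination this

variable [∀ i, NeZero ((z i * (h - 1) + 1) * s i)]

lemma val_resHom (g : ∀ i, ZMod ((z i * (h - 1) + 1) * s i)) (i : Fin m) :
    (resHom m h s z g i).val = (g i).val % s i :=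
  ZMod.val_natCast _ _

lemma mem_Lsub_iff {g : ∀ i, ZMod ((z i * (h - 1) + 1) * s i)} :
    g ∈ Lsub m h s z ↔ resHom m h s z g = 0 := by
  simp only [funext_iff, Pi.zero_apply, resHom, AddMonoidHom.coe_mk, ZeroHom.coe_mk,
    ZMod.natCast_eq_zero_iff]
  refine ⟨fun hg i => (hg i).1, fun hg i =>
    ⟨hg i, fun hzi => Nat.eq_zero_of_dvd_of_lt (hg i) ?_⟩⟩
  simpa [modulus_of_eq_zero hzi] using (g i).val_lt

lemma resHom_surjective [∀ i, NeZero (s i)] : Function.Surjective (resHom m h s z) := fun x =>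
  ⟨fun i => ((x i).val : ZMod _), funext fun i => by
    simp only [resHom, AddMonoidHom.coe_mk, ZeroHom.coe_mk]
    rw [ZMod.val_cast_of_lt ((x i).val_lt.trans_le (Nat.le_mul_of_pos_left _ (Nat.succ_pos _)))]
    simp⟩

lemma natCast_div_val_add [∀ i, NeZero (s i)] [NeZero h] (hz : ∀ i, z i ≤ 1) {i : Fin m}
    (a b : ZMod ((z i * (h - 1) + 1) * s i)) :
    (((a + b).val / s i : ℕ) : ZMod h)
      = ((a.val / s i : ℕ) : ZMod h) + ((b.val / s i : ℕ) : ZMod h)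
        + ((if z i = 1 then (a.val % s i + b.val % s i) / s i else 0 : ℕ) : ZMod h) := by
  have hs : 0 < s i := Nat.pos_of_ne_zero (NeZero.ne _)
  rw [ZMod.val_add]
  rcases Nat.le_one_iff_eq_zero_or_eq_one.1 (hz i) with hzi | hzi
  · have hlt : ∀ c : ZMod ((z i * (h - 1) + 1) * s i), c.val < s i := fun c => by
      simpa [modulus_of_eq_zero hzi] using c.val_lt
    simp [hzi, Nat.div_eq_of_lt (hlt a), Nat.div_eq_of_lt (hlt b)]
  · have key : ∀ A B, (A + B) % ((z i * (h - 1) + 1) * s i) / s i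
        ≡ A / s i + B / s i + (A % s i + B % s i) / s i [MOD h] := by
      rw [modulus_of_eq_one hzi]
      exact fun A B => Nat.add_mod_mul_div_modEq A B h (s i) hs
    rw [if_pos hzi, (ZMod.natCast_eq_natCast_iff _ _ _).2 (key _ _)]
    push_cast
    ring

lemma highDigitSum_add [∀ i, NeZero (s i)] [NeZero h] (hz : ∀ i, z i ≤ 1)
    (g w : ∀ i, ZMod ((z i * (h - 1) + 1) * s i)) :
    highDigitSum m h s z (g + w) = highDigitSum m h s z g + highDigitSum m h s z w
      + muexp m h s z (resHom m h s z g) (resHom m h s z w) := by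
  simp only [highDigitSum, muexp, Nat.cast_sum, ← Finset.sum_add_distrib, val_resHom]
  exact Finset.sum_congr rfl fun i _ => natCast_div_val_add hz (g i) (w i)

lemma highDigitSum_add_of_mem [∀ i, NeZero (s i)] [NeZero h] (hz : ∀ i, z i ≤ 1)
    (g : ∀ i, ZMod ((z i * (h - 1) + 1) * s i))
    {l : ∀ i, ZMod ((z i * (h - 1) + 1) * s i)} (hl : l ∈ Lsub m h s z) :
    highDigitSum m h s z (g + l) = highDigitSum m h s z g + highDigitSum m h s z l := by
  rw [highDigitSum_add hz, mem_Lsub_iff.1 hl, muexp_zero_right, add_zero]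

lemma highDigitSum_nsmul_of_mem [∀ i, NeZero (s i)] [NeZero h] (hz : ∀ i, z i ≤ 1) (n : ℕ)
    {l : ∀ i, ZMod ((z i * (h - 1) + 1) * s i)} (hl : l ∈ Lsub m h s z) :
    highDigitSum m h s z (n • l) = n • highDigitSum m h s z l := by
  induction n with
  | zero => simp [highDigitSum]
  | succ n ih => rw [succ_nsmul, highDigitSum_add_of_mem hz _ hl, ih, succ_nsmul]

end Expansion

lemma nsmul_single_eq_ofCoords {m h : ℕ} {s z : Fin m → ℕ} {i₀ : Fin m} (hh : 2 ≤ h)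
    (hdvd : h ∣ s i₀) :
    h • (Pi.single i₀ ((s i₀ / h : ℕ) : ZMod _) : ∀ i, ZMod ((z i * (h - 1) + 1) * s i))
      = ofCoords m h s z i₀ 0 1 := by
  have : Fact (1 < h) := ⟨hh⟩
  funext i
  by_cases hi : i = i₀
  · subst hi
    simp [ofCoords, ZMod.val_one, ← Nat.cast_mul, Nat.mul_div_cancel' hdvd]
  · simp [ofCoords, hi]

section Coordinates

variable {m h : ℕ} {s z : Fin m → ℕ} [∀ i, NeZero (s i)] [NeZero h]

lemma val_ofCoords {i₀ : Fin m} (hi₀ : z i₀ = 1) (x : ∀ i, ZMod (s i)) (u : ZMod h)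
    (i : Fin m) :
    (ofCoords m h s z i₀ x u i).val = (x i).val + if i = i₀ then u.val * s i else 0 := by
  refine ZMod.val_cast_of_lt ?_
  split_ifs with hi
  · subst hi
    have hu : u.val + 1 ≤ h := u.val_lt
    rw [modulus_of_eq_one hi₀]
    nlinarith [(x i).val_lt]
  · exact (x i).val_lt.trans_le (Nat.le_mul_of_pos_left _ (Nat.succ_pos _))

lemma highDigitSum_ofCoords {i₀ : Fin m} (hi₀ : z i₀ = 1) (x : ∀ i, ZMod (s i))
    (u : ZMod h) :
    highDigitSum m h s z (ofCoords m h s z i₀ x u) = u := by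
  have hdiv (i : Fin m) :
      (ofCoords m h s z i₀ x u i).val / s i = if i = i₀ then u.val else 0 := by
    rw [val_ofCoords hi₀]
    split_ifs
    · rw [Nat.add_mul_div_right _ _ (NeZero.pos _), Nat.div_eq_of_lt (x i).val_lt, zero_add]
    · exact Nat.div_eq_of_lt (x i).val_lt
  simp [highDigitSum, hdiv]

variable [∀ i, NeZero ((z i * (h - 1) + 1) * s i)]

lemma resHom_ofCoords {i₀ : Fin m} (hi₀ : z i₀ = 1) (x : ∀ i, ZMod (s i)) (u : ZMod h) :
    resHom m h s z (ofCoords m h s z i₀ x u) = x := by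
  funext i
  simp only [resHom, AddMonoidHom.coe_mk, ZeroHom.coe_mk, val_ofCoords hi₀]
  split_ifs <;> simp

end Coordinates

section Quotient

variable {m h : ℕ} {s z : Fin m → ℕ} [∀ i, NeZero ((z i * (h - 1) + 1) * s i)]
  (hh : 2 ≤ h) (hs : ∀ i, 1 < s i) (hz : ∀ i, z i ≤ 1)

lemma mem_Ksub_iff {g : ∀ i, ZMod ((z i * (h - 1) + 1) * s i)} :
    g ∈ Ksub m h s z hh hs hz ↔ resHom m h s z g = 0 ∧ highDigitSum m h s z g = 0 := by
  rw [← mem_Lsub_iff, highDigitSum, ZMod.natCast_eq_zero_iff]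
  rfl

@[simp]
lemma betaHom_mk (g : ∀ i, ZMod ((z i * (h - 1) + 1) * s i)) :
    betaHom m h s z hh hs hz g = resHom m h s z g :=
  rfl

lemma map_mk_Lsub_eq_ker :
    (Lsub m h s z).map (QuotientAddGroup.mk' (Ksub m h s z hh hs hz))
      = (betaHom m h s z hh hs hz).ker := by
  ext r
  induction r using QuotientAddGroup.induction_on with | H g => ?_
  change QuotientAddGroup.mk' _ g ∈ _ ↔ _
  rw [← AddSubgroup.mem_comap, QuotientAddGroup.comap_map_mk',
    sup_eq_right.2 fun _ hk => hk.1, mem_Lsub_iff]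
  rfl

lemma index_map_mk_Lsub [∀ i, NeZero (s i)] {q : ℕ} (hsq : ∀ i, s i = q) :
    ((Lsub m h s z).map (QuotientAddGroup.mk' (Ksub m h s z hh hs hz))).index = q ^ m := by
  have hsurj : Function.Surjective (betaHom m h s z hh hs hz) := fun x =>
    let ⟨g, hg⟩ := resHom_surjective (h := h) (z := z) x
    ⟨g, hg⟩
  rw [map_mk_Lsub_eq_ker, AddSubgroup.index_ker, AddMonoidHom.range_eq_top.2 hsurj,
    AddSubgroup.card_top, Nat.card_eq_fintype_card, card_pi_zmod hsq]

variable [∀ i, NeZero (s i)] [NeZero h]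

lemma mk_eq_mk_iff {a b : ∀ i, ZMod ((z i * (h - 1) + 1) * s i)} :
    (a : _ ⧸ Ksub m h s z hh hs hz) = b
      ↔ resHom m h s z a = resHom m h s z b
        ∧ highDigitSum m h s z a = highDigitSum m h s z b := by
  rw [QuotientAddGroup.eq, mem_Ksub_iff, map_add, map_neg, neg_add_eq_zero]
  refine and_congr_right fun hab => ?_
  have hl : -a + b ∈ Lsub m h s z :=
    mem_Lsub_iff.2 (by rw [map_add, map_neg, hab, neg_add_cancel])
  have hsum := highDigitSum_add_of_mem hz a hl
  rw [add_neg_cancel_left] at hsum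
  constructor <;> intro h' <;> linear_combination -hsum - h'

def quotientHeight :
    (∀ i, ZMod ((z i * (h - 1) + 1) * s i)) ⧸ Ksub m h s z hh hs hz → ZMod h :=
  fun r => Quotient.liftOn' r (highDigitSum m h s z) fun _ _ hab =>
    ((mk_eq_mk_iff hh hs hz).1 (QuotientAddGroup.eq.2 (QuotientAddGroup.leftRel_apply.1 hab))).2

@[simp]
lemma quotientHeight_mk (g : ∀ i, ZMod ((z i * (h - 1) + 1) * s i)) :
    quotientHeight hh hs hz g = highDigitSum m h s z g :=
  rfl

/-- `E/K ≅ G × ℤ_h` as sets; by `quotientHeight_add_mk` the group law of `E/K` becomes that of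
the central extension of `G` by `ℤ_h` with cocycle `μ_z`. -/
def quotientEquiv {i₀ : Fin m} (hi₀ : z i₀ = 1) :
    (∀ i, ZMod ((z i * (h - 1) + 1) * s i)) ⧸ Ksub m h s z hh hs hz
      ≃ (∀ i, ZMod (s i)) × ZMod h where
  toFun r := (betaHom m h s z hh hs hz r, quotientHeight hh hs hz r)
  invFun p := ofCoords m h s z i₀ p.1 p.2
  left_inv r := QuotientAddGroup.induction_on r fun _ =>
    (mk_eq_mk_iff hh hs hz).2 ⟨resHom_ofCoords hi₀ _ _, highDigitSum_ofCoords hi₀ _ _⟩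
  right_inv _ := Prod.ext (resHom_ofCoords hi₀ _ _) (highDigitSum_ofCoords hi₀ _ _)

lemma quotientHeight_add_mk
    (r : (∀ i, ZMod ((z i * (h - 1) + 1) * s i)) ⧸ Ksub m h s z hh hs hz)
    (w : ∀ i, ZMod ((z i * (h - 1) + 1) * s i)) :
    quotientHeight hh hs hz (r + w) = quotientHeight hh hs hz r + highDigitSum m h s z w
      + muexp m h s z (betaHom m h s z hh hs hz r) (resHom m h s z w) :=
  QuotientAddGroup.induction_on r fun g => by
    rw [← QuotientAddGroup.mk_add, quotientHeight_mk, highDigitSum_add hz]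
    rfl

lemma mem_image_mk_iff (φ : (∀ i, ZMod (s i)) → ZMod h)
    (r : (∀ i, ZMod ((z i * (h - 1) + 1) * s i)) ⧸ Ksub m h s z hh hs hz) :
    r ∈ QuotientAddGroup.mk '' {g | expand m h s z φ g = 0}
      ↔ quotientHeight hh hs hz r = -φ (betaHom m h s z hh hs hz r) := by
  induction r using QuotientAddGroup.induction_on with | H g => ?_
  rw [quotientHeight_mk, betaHom_mk, eq_neg_iff_add_eq_zero, add_comm]
  constructor
  · rintro ⟨g', hg', hgg'⟩
    obtain ⟨hres, hsum⟩ := (mk_eq_mk_iff hh hs hz).1 hgg'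
    rw [← hres, ← hsum]
    exact hg'
  · exact fun hg => ⟨g, hg, rfl⟩

end Quotient

def IsGPhA (m h : ℕ) (s z : Fin m → ℕ) [∀ i, NeZero ((z i * (h - 1) + 1) * s i)]
    [∀ i, NeZero (s i)] (φ : (∀ i, ZMod (s i)) → ZMod h) : Prop :=
  ∀ g, g ∉ LSet m h s z → AC h (expand m h s z φ) g = 0

/-- The exponent of `ζ_h` in the autocorrelation of `φ'`, read on `G`. -/
def twistedDiff (m h : ℕ) (s z : Fin m → ℕ) (φ : (∀ i, ZMod (s i)) → ZMod h)
    (y x : ∀ i, ZMod (s i)) : ZMod h :=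
  φ x - φ (x + y) - muexp m h s z x y

section Autocorrelation

variable {m h : ℕ} {s z : Fin m → ℕ} [∀ i, NeZero ((z i * (h - 1) + 1) * s i)]
  [∀ i, NeZero (s i)] [NeZero h]

lemma expand_sub_expand_add (hz : ∀ i, z i ≤ 1) (φ : (∀ i, ZMod (s i)) → ZMod h)
    (g w : ∀ i, ZMod ((z i * (h - 1) + 1) * s i)) :
    expand m h s z φ g - expand m h s z φ (g + w)
      = twistedDiff m h s z φ (resHom m h s z w) (resHom m h s z g) - highDigitSum m h s z w := by
  change φ (resHom m h s z g) + highDigitSum m h s z g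
    - (φ (resHom m h s z (g + w)) + highDigitSum m h s z (g + w)) = _
  rw [map_add, highDigitSum_add hz, twistedDiff]
  ring

lemma AC_expand (hz : ∀ i, z i ≤ 1) (φ : (∀ i, ZMod (s i)) → ZMod h)
    (w : ∀ i, ZMod ((z i * (h - 1) + 1) * s i)) :
    AC h (expand m h s z φ) w = #{g | resHom m h s z g = 0}
      • (ZMod.stdAddChar (-highDigitSum m h s z w)
        * ∑ x, ZMod.stdAddChar (twistedDiff m h s z φ (resHom m h s z w) x)) := by
  simp_rw [AC, zeta_pow_val, expand_sub_expand_add hz, sub_eq_add_neg _ (highDigitSum m h s z w),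
    AddChar.map_add_eq_mul, ← Finset.sum_mul,
    sum_comp_eq_card_ker_nsmul (resHom m h s z) resHom_surjective
      fun x => ZMod.stdAddChar (twistedDiff m h s z φ (resHom m h s z w) x), smul_mul_assoc,
    mul_comm]

lemma isGPhA_iff (hz : ∀ i, z i ≤ 1) (φ : (∀ i, ZMod (s i)) → ZMod h) :
    IsGPhA m h s z φ ↔ ∀ y ≠ 0, ∑ x, ZMod.stdAddChar (twistedDiff m h s z φ y x) = 0 := by
  have hcard : #{g : ∀ i, ZMod ((z i * (h - 1) + 1) * s i) | resHom m h s z g = 0} ≠ 0 :=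
    Finset.card_ne_zero.2 ⟨0, by simp⟩
  simp_rw [IsGPhA, AC_expand hz, smul_eq_zero, hcard, false_or, mul_eq_zero,
    stdAddChar_ne_zero (h := h), false_or]
  constructor
  · intro H y hy
    obtain ⟨g, rfl⟩ := resHom_surjective (h := h) (z := z) y
    exact H g fun hg => hy (mem_Lsub_iff.1 hg)
  · exact fun H g hg => H _ fun h0 => hg (mem_Lsub_iff.2 h0)

end Autocorrelation

section ButsonHadamard

variable {m h : ℕ} {s z : Fin m → ℕ}

lemma psiexp_zero_left [∀ i, NeZero (s i)] (φ : (∀ i, ZMod (s i)) → ZMod h) (hφ0 : φ 0 = 0)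
    (c : ∀ i, ZMod (s i)) :
    psiexp m h s z φ 0 c = 0 := by
  rw [psiexp, muexp_comm, muexp_zero_right, zero_add, zero_add, hφ0, sub_zero, sub_self]

lemma isBH_iff [∀ i, NeZero (s i)] [NeZero h] {q : ℕ} (hsq : ∀ i, s i = q)
    (φ : (∀ i, ZMod (s i)) → ZMod h) (hφ0 : φ 0 = 0) :
    IsBH (q ^ m) h (Matrix.of fun a b : ∀ i, ZMod (s i) => zeta h ^ (psiexp m h s z φ a b).val)
      ↔ ∀ d ≠ 0, ∑ c, ZMod.stdAddChar (psiexp m h s z φ d c) = 0 := by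
  simp_rw [IsBH, zeta_pow_val, ← card_pi_zmod hsq,
    cocyclic_mul_conjTranspose_eq_iff _ (psiexp_add_psiexp φ) (psiexp_zero_left φ hφ0), true_and]
  exact and_iff_right fun a b => ⟨_, (zeta_pow_val _).symm⟩

lemma twistedDiff_eq (φ : (∀ i, ZMod (s i)) → ZMod h) (y x : ∀ i, ZMod (s i)) :
    twistedDiff m h s z φ y x = -psiexp m h s z φ y x - φ y := by
  rw [twistedDiff, psiexp, muexp_comm, add_comm y x]
  ring

lemma sum_twistedDiff_eq_zero_iff [∀ i, NeZero (s i)] [NeZero h]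
    (φ : (∀ i, ZMod (s i)) → ZMod h) (y : ∀ i, ZMod (s i)) :
    ∑ x, ZMod.stdAddChar (twistedDiff m h s z φ y x) = 0
      ↔ ∑ x, ZMod.stdAddChar (psiexp m h s z φ y x) = 0 := by
  simp_rw [twistedDiff_eq, sub_eq_add_neg, AddChar.map_add_eq_mul, ← Finset.sum_mul,
    AddChar.map_neg_eq_conj, ← map_sum, mul_eq_zero, map_eq_zero, stdAddChar_ne_zero (h := h),
    or_false]

lemma symm_isBH_iff_isGPhA [∀ i, NeZero ((z i * (h - 1) + 1) * s i)] [∀ i, NeZero (s i)]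
    [NeZero h] {q : ℕ} (hsq : ∀ i, s i = q) (hz : ∀ i, z i ≤ 1)
    (φ : (∀ i, ZMod (s i)) → ZMod h) (hφ0 : φ 0 = 0) :
    ((∀ a b, psiexp m h s z φ a b = psiexp m h s z φ b a)
        ∧ IsBH (q ^ m) h
            (Matrix.of fun a b : ∀ i, ZMod (s i) => zeta h ^ (psiexp m h s z φ a b).val))
      ↔ IsGPhA m h s z φ := by
  simp_rw [isGPhA_iff hz, isBH_iff hsq φ hφ0, sum_twistedDiff_eq_zero_iff]
  exact and_iff_right (psiexp_comm φ)

end ButsonHadamard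

section RelativeDifferenceSet

variable {m h : ℕ} {s z : Fin m → ℕ} [∀ i, NeZero (s i)] [NeZero h]

lemma sum_twistedDiff_eq_zero_iff_card_eq (hp : h.Prime) {q : ℕ} (hsq : ∀ i, s i = q)
    (φ : (∀ i, ZMod (s i)) → ZMod h) (y : ∀ i, ZMod (s i)) :
    ∑ x, ZMod.stdAddChar (twistedDiff m h s z φ y x) = 0
      ↔ ∀ u, #{x | twistedDiff m h s z φ y x = u} = q ^ m / h := by
  have hfiber : ∑ x, ZMod.stdAddChar (twistedDiff m h s z φ y x)
      = ∑ u, ((#{x | twistedDiff m h s z φ y x = u} : ℚ) : ℂ) * ZMod.stdAddChar u := by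
    rw [← Finset.sum_fiberwise univ (twistedDiff m h s z φ y)]
    refine Finset.sum_congr rfl fun u _ => ?_
    rw [Finset.sum_congr rfl fun x hx => by rw [(Finset.mem_filter.1 hx).2], Finset.sum_const,
      nsmul_eq_mul, Rat.cast_natCast]
  have htotal : ∑ u, #{x | twistedDiff m h s z φ y x = u} = q ^ m := by
    rw [← Finset.card_eq_sum_card_fiberwise fun _ _ => Finset.mem_univ _, Finset.card_univ,
      card_pi_zmod hsq]
  rw [hfiber, sum_mul_stdAddChar_eq_zero_iff hp]
  simp_rw [Nat.cast_inj]
  rw [forall_eq_iff_forall_eq_sum_div, htotal, ZMod.card]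

variable [∀ i, NeZero ((z i * (h - 1) + 1) * s i)] (hh : 2 ≤ h) (hs : ∀ i, 1 < s i)
  (hz : ∀ i, z i ≤ 1) {i₀ : Fin m}

lemma card_quotient (hi₀ : z i₀ = 1) {q : ℕ} (hsq : ∀ i, s i = q) :
    Nat.card ((∀ i, ZMod ((z i * (h - 1) + 1) * s i)) ⧸ Ksub m h s z hh hs hz) = q ^ m * h := by
  rw [Nat.card_congr (quotientEquiv hh hs hz hi₀), Nat.card_prod, Nat.card_eq_fintype_card,
    card_pi_zmod hsq, Nat.card_zmod]

lemma card_map_mk_Lsub (hi₀ : z i₀ = 1) {q : ℕ} (hsq : ∀ i, s i = q) :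
    Nat.card ((Lsub m h s z).map (QuotientAddGroup.mk' (Ksub m h s z hh hs hz))) = h := by
  have hcard := ((Lsub m h s z).map (QuotientAddGroup.mk' (Ksub m h s z hh hs hz))).card_mul_index
  rw [index_map_mk_Lsub hh hs hz hsq, card_quotient hh hs hz hi₀ hsq, mul_comm (q ^ m)] at hcard
  exact Nat.eq_of_mul_eq_mul_right (card_pi_zmod hsq ▸ Fintype.card_pos) hcard

lemma injOn_betaHom_image_mk (hi₀ : z i₀ = 1) (φ : (∀ i, ZMod (s i)) → ZMod h) :
    Set.InjOn (betaHom m h s z hh hs hz) (QuotientAddGroup.mk '' {g | expand m h s z φ g = 0}) :=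
  fun r hr r' hr' hrr' => (quotientEquiv hh hs hz hi₀).injective <| Prod.ext hrr' <| by
    change quotientHeight hh hs hz r = quotientHeight hh hs hz r'
    rw [(mem_image_mk_iff hh hs hz φ r).1 hr, (mem_image_mk_iff hh hs hz φ r').1 hr', hrr']

lemma eq_of_sub_mem_map_mk_Lsub (hi₀ : z i₀ = 1) (φ : (∀ i, ZMod (s i)) → ZMod h)
    {r r' : (∀ i, ZMod ((z i * (h - 1) + 1) * s i)) ⧸ Ksub m h s z hh hs hz}
    (hr : r ∈ QuotientAddGroup.mk '' {g | expand m h s z φ g = 0})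
    (hr' : r' ∈ QuotientAddGroup.mk '' {g | expand m h s z φ g = 0})
    (hrr' : r - r' ∈ (Lsub m h s z).map (QuotientAddGroup.mk' (Ksub m h s z hh hs hz))) :
    r = r' := by
  rw [map_mk_Lsub_eq_ker, AddMonoidHom.mem_ker, map_sub, sub_eq_zero] at hrr'
  exact injOn_betaHom_image_mk hh hs hz hi₀ φ hr hr' hrr'

/-- `R` is the graph of `-φ` in the coordinates of `quotientEquiv`. -/
noncomputable def imageMkEquiv (hi₀ : z i₀ = 1) (φ : (∀ i, ZMod (s i)) → ZMod h) :
    QuotientAddGroup.mk (s := Ksub m h s z hh hs hz) '' {g | expand m h s z φ g = 0}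
      ≃ ∀ i, ZMod (s i) :=
  Equiv.ofBijective (fun r => betaHom m h s z hh hs hz r)
    ⟨(injOn_betaHom_image_mk hh hs hz hi₀ φ).injective, fun x =>
      ⟨⟨(ofCoords m h s z i₀ x (-φ x) : _ ⧸ Ksub m h s z hh hs hz),
        (mem_image_mk_iff hh hs hz φ _).2 <| by
          rw [quotientHeight_mk, betaHom_mk, resHom_ofCoords hi₀, highDigitSum_ofCoords hi₀]⟩,
        resHom_ofCoords hi₀ x (-φ x)⟩⟩

lemma card_pairs_sub_mk (hi₀ : z i₀ = 1) (φ : (∀ i, ZMod (s i)) → ZMod h)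
    (w : ∀ i, ZMod ((z i * (h - 1) + 1) * s i)) :
    Nat.card {p : (QuotientAddGroup.mk (s := Ksub m h s z hh hs hz) ''
          {g | expand m h s z φ g = 0}) ×
        (QuotientAddGroup.mk (s := Ksub m h s z hh hs hz) '' {g | expand m h s z φ g = 0}) //
        (p.1 : _ ⧸ Ksub m h s z hh hs hz) - p.2 = w}
      = #{x | twistedDiff m h s z φ (resHom m h s z w) x = highDigitSum m h s z w} := by
  rw [card_pairs_sub_eq, ← Fintype.card_subtype, ← Nat.card_eq_fintype_card]
  refine Nat.card_congr ((imageMkEquiv hh hs hz hi₀ φ).subtypeEquiv fun r => ?_)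
  change _ ↔ twistedDiff m h s z φ _ (betaHom m h s z hh hs hz r) = _
  rw [mem_image_mk_iff, quotientHeight_add_mk, map_add, betaHom_mk,
    (mem_image_mk_iff hh hs hz φ r).1 r.2, twistedDiff]
  constructor <;> intro h' <;> linear_combination -h'

lemma nsmul_eq_zero_of_betaHom_eq_zero
    {n : (∀ i, ZMod ((z i * (h - 1) + 1) * s i)) ⧸ Ksub m h s z hh hs hz}
    (hn : betaHom m h s z hh hs hz n = 0) : h • n = 0 := by
  induction n using QuotientAddGroup.induction_on with | H l => ?_
  have hl : l ∈ Lsub m h s z := mem_Lsub_iff.2 hn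
  rw [← QuotientAddGroup.mk_nsmul, ← QuotientAddGroup.mk_zero, mk_eq_mk_iff hh hs hz,
    highDigitSum_nsmul_of_mem hz h hl, map_nsmul, mem_Lsub_iff.1 hl]
  simp [highDigitSum]

/-- With `e = (s_{i₀} / h) e_{i₀}`, a complement `C` of `L/K` would contain `h • (e + K)`,
because `L/K` has exponent `h`; but `h • e = ofCoords 0 1` lies in `L \ K`. -/
lemma not_exists_isCompl_map_mk_Lsub (hi₀ : z i₀ = 1) (hdvd : h ∣ s i₀) :
    ¬∃ C : AddSubgroup ((∀ i, ZMod ((z i * (h - 1) + 1) * s i)) ⧸ Ksub m h s z hh hs hz),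
      IsCompl ((Lsub m h s z).map (QuotientAddGroup.mk' (Ksub m h s z hh hs hz))) C := by
  rintro ⟨C, hC⟩
  rw [map_mk_Lsub_eq_ker] at hC
  set e : (∀ i, ZMod ((z i * (h - 1) + 1) * s i)) ⧸ Ksub m h s z hh hs hz :=
    QuotientAddGroup.mk (Pi.single i₀ ((s i₀ / h : ℕ) : ZMod _))
  have he : h • e = ofCoords m h s z i₀ 0 1 := by
    rw [← QuotientAddGroup.mk_nsmul, nsmul_single_eq_ofCoords hh hdvd]
  have he_ker : h • e ∈ (betaHom m h s z hh hs hz).ker := by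
    rw [he, AddMonoidHom.mem_ker, betaHom_mk, resHom_ofCoords hi₀]
  have he_ne : h • e ≠ 0 := fun h0 => by
    have : Fact (1 < h) := ⟨hh⟩
    have hU := congrArg (quotientHeight hh hs hz) (he.symm.trans h0)
    rw [quotientHeight_mk, highDigitSum_ofCoords hi₀, ← QuotientAddGroup.mk_zero,
      quotientHeight_mk] at hU
    simp [highDigitSum] at hU
  obtain ⟨n, hn, c, hc, hnc⟩ := AddSubgroup.mem_sup.1 (hC.sup_eq_top ▸ AddSubgroup.mem_top e)
  have he_C : h • e ∈ C := by
    rw [← hnc, nsmul_add, nsmul_eq_zero_of_betaHom_eq_zero hh hs hz hn, zero_add]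
    exact C.nsmul_mem hc h
  exact he_ne ((AddSubgroup.mem_bot).1 (hC.disjoint.le_bot ⟨he_ker, he_C⟩))

lemma isGPhA_iff_isAddRDS (hi₀ : z i₀ = 1) (hp : h.Prime) {q : ℕ} (hsq : ∀ i, s i = q)
    (φ : (∀ i, ZMod (s i)) → ZMod h) :
    IsGPhA m h s z φ
      ↔ IsAddRDS ((Lsub m h s z).map (QuotientAddGroup.mk' (Ksub m h s z hh hs hz)))
          (QuotientAddGroup.mk (s := Ksub m h s z hh hs hz) '' {g | expand m h s z φ g = 0})
          (q ^ m) h (q ^ m) (q ^ m / h) := by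
  have hcount : (∀ y ≠ 0, ∀ u, #{x | twistedDiff m h s z φ y x = u} = q ^ m / h)
      ↔ ∀ w : ∀ i, ZMod ((z i * (h - 1) + 1) * s i), resHom m h s z w ≠ 0 →
          #{x | twistedDiff m h s z φ (resHom m h s z w) x = highDigitSum m h s z w}
            = q ^ m / h := by
    refine ⟨fun H w hw => H _ hw _, fun H y hy u => ?_⟩
    have hw := H (ofCoords m h s z i₀ y u)
    rw [resHom_ofCoords hi₀, highDigitSum_ofCoords hi₀] at hw
    exact hw hy
  rw [isGPhA_iff hz]
  simp_rw [sum_twistedDiff_eq_zero_iff_card_eq hp hsq, IsAddRDS,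
    index_map_mk_Lsub hh hs hz hsq, card_map_mk_Lsub hh hs hz hi₀ hsq, Nat.card_congr
    (imageMkEquiv hh hs hz hi₀ φ), Nat.card_eq_fintype_card, card_pi_zmod hsq, true_and]
  rw [and_iff_right fun r hr r' hr' => eq_of_sub_mem_map_mk_Lsub hh hs hz hi₀ φ hr hr',
    hcount, map_mk_Lsub_eq_ker]
  refine ⟨fun H x hx => ?_, fun H w hw => ?_⟩
  · induction x using QuotientAddGroup.induction_on with | H w => ?_
    rw [card_pairs_sub_mk hh hs hz hi₀]
    exact H w hx
  · rw [← card_pairs_sub_mk hh hs hz hi₀]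
    exact H w hw

end RelativeDifferenceSet

/-- let `h` be a prime divisor of `q`, let `φ : ℤ_q^m → ℤ_h` be a
normalized array with expansion `φ'` of type `z ≠ 0`, and let `E, K, L` be the
associated groups (here `s = (q,…,q)`).  The following are equivalent:
(i) the cocycle `μ_z·∂φ` is symmetric and orthogonal, i.e. `M_{μ_z·∂φ}` is a
symmetric Butson Hadamard matrix in `BH(q^m, h)`;
(ii) `φ` is a `GPhA(q^m)` of type `z`;
(iii) `{g + K ∈ E/K : φ'(g) = 0}` is a non-splitting `(q^m, h, q^m, q^m/h)`-relative
difference set in `E/K` with forbidden subgroup `L/K`. -/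
theorem symm_orthogonal_iff_GPhA_iff_nonsplitting_RDS
    (q m h : ℕ) (s z : Fin m → ℕ) (hsq : ∀ i, s i = q)
    [∀ i, NeZero ((z i * (h - 1) + 1) * s i)] [∀ i, NeZero (s i)]
    (hh : 2 ≤ h) (hs : ∀ i, 1 < s i) (hz : ∀ i, z i ≤ 1)
    (hp : Nat.Prime h) (hdvd : h ∣ q) (hz0 : ∃ i, z i = 1)
    (φ : (∀ i, ZMod (s i)) → ZMod h) (hφ0 : φ 0 = 0) :
    (((∀ a b, psiexp m h s z φ a b = psiexp m h s z φ b a)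
        ∧ IsBH (q ^ m) h
            (Matrix.of fun a b : ∀ i, ZMod (s i) =>
              zeta h ^ (psiexp m h s z φ a b).val))
      ↔ (∀ g, g ∉ LSet m h s z → AC h (expand m h s z φ) g = 0))
    ∧ ((∀ g, g ∉ LSet m h s z → AC h (expand m h s z φ) g = 0)
      ↔ (IsAddRDS
            ((Lsub m h s z).map (QuotientAddGroup.mk' (Ksub m h s z hh hs hz)))
            (QuotientAddGroup.mk (s := Ksub m h s z hh hs hz) ''
              {g | expand m h s z φ g = 0})
            (q ^ m) h (q ^ m) (q ^ m / h)
          ∧ ¬∃ C : AddSubgroup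
                ((∀ i, ZMod ((z i * (h - 1) + 1) * s i)) ⧸ Ksub m h s z hh hs hz),
              IsCompl
                ((Lsub m h s z).map (QuotientAddGroup.mk' (Ksub m h s z hh hs hz)))
                C)) := by
  have : NeZero h := ⟨by omega⟩
  obtain ⟨i₀, hi₀⟩ := hz0
  exact ⟨symm_isBH_iff_isGPhA hsq hz φ hφ0,
    (isGPhA_iff_isAddRDS hh hs hz hi₀ hp hsq φ).trans
      (and_iff_left (not_exists_isCompl_map_mk_Lsub hh hs hz hi₀ (hsq i₀ ▸ hdvd))).symm⟩
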